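/- arXiv:1511.00020 — 2 statements merged into one kernel-verified Lean document; each statement's English description precedes it below -/
import Mathlib

section
/- (Hasse–Davenport product relation) For any multiplicative character A on F_q (q odd), A(4)·G(A)·G(Aφ) = G(A²)·G(φ), where φ is the quadratic character. -/
open Complex Finset

variable {F : Type*} [Field F] [Fintype F]

/-- Canonical additive character `ζ^y = exp((2πi/p)·Tr_{F_q/F_p}(y))`. -/
noncomputable def zetaChar (p : ℕ) [Fact p.Prime] [CharP F p] (y : F) : ℂ :=
  letI := ZMod.algebra F p
  Complex.exp (2 * Real.pi * Complex.I * ((Algebra.trace (ZMod p) F y).val : ℂ) / p)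

/-- Gauss sum `G(A) = Σ_y A(y) ζ^y`. -/
noncomputable def gaussS (p : ℕ) [Fact p.Prime] [CharP F p] (A : MulChar F ℂ) : ℂ :=
  ∑ y : F, A y * zetaChar p y

/-- Jacobi sum `J(A,B) = Σ_y A(y) B(1-y)`. -/
noncomputable def jacobiS (A B : MulChar F ℂ) : ℂ :=
  ∑ y : F, A y * B (1 - y)

/-- Finite field hypergeometric `₂F₁(A,B;C;x) = (ε(x)/q) Σ_y B(y) B̄C(y-1) Ā(1-xy)`. -/
noncomputable def F21 (A B C : MulChar F ℂ) (x : F) : ℂ :=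
  ((1 : MulChar F ℂ) x / (Fintype.card F : ℂ)) *
    ∑ y : F, B y * (B⁻¹ * C) (y - 1) * A⁻¹ (1 - x * y)

/-- Binomial coefficient `(A choose B) = (B(-1)/q) J(A, B̄)`. -/
noncomputable def binom (A B : MulChar F ℂ) : ℂ :=
  B (-1) / (Fintype.card F : ℂ) * jacobiS A B⁻¹

/-- Pseudo hypergeometric function `F*(C,D;x)`. -/
noncomputable def Fstar (C D : MulChar F ℂ) (x : F) : ℂ :=
  letI : Fintype (MulChar F ℂ) := Fintype.ofFinite _
  (Fintype.card F : ℂ) / ((Fintype.card F : ℂ) - 1) *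
      ∑ χ : MulChar F ℂ, binom (C * χ ^ 2) χ * binom (C * χ) (D * χ) * χ (x / 4)
    + (C * D) (-1) * C⁻¹ (x / 4) / (Fintype.card F : ℂ)

/-!
For `χ ^ 2 ≠ 1` the Jacobi sum relations `G(χ)² = G(χ²) J(χ, χ)` and
`G(φ) G(χ) = G(φχ) J(φ, χ)` reduce the claim to `χ(4) J(χ, χ) = J(φ, χ)`. The substitution
`y = (1 - u) / 2` turns `4 y (1 - y)` into `1 - u²`, and since `φ` is the quadratic character
(the only nontrivial character of order two, `Fˣ` being cyclic), `u ↦ u²` hits `t` exactly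
`1 + φ(t)` times; the sum `Σ χ(1 - t)` of a nontrivial character vanishes, leaving `J(φ, χ)`.
The remaining cases `χ = 1` and `χ = φ` are immediate.
-/

section ZetaAddChar

variable (p : ℕ) [Fact p.Prime] [CharP F p]

noncomputable def zetaAddChar : AddChar F ℂ :=
  letI := ZMod.algebra F p
  ZMod.stdAddChar.compAddMonoidHom (Algebra.trace (ZMod p) F).toAddMonoidHom

omit [Fintype F] in
lemma zetaAddChar_apply (y : F) : zetaAddChar p y = zetaChar p y := by
  rw [zetaAddChar, AddChar.compAddMonoidHom_apply, ZMod.stdAddChar_apply,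
    ZMod.toCircle_apply, zetaChar]
  rfl

lemma gaussS_eq_gaussSum (A : MulChar F ℂ) : gaussS p A = gaussSum A (zetaAddChar p) :=
  sum_congr rfl fun y _ ↦ by rw [zetaAddChar_apply]

lemma isPrimitive_zetaAddChar : (zetaAddChar (F := F) p).IsPrimitive := by
  obtain rfl : ringChar F = p := ringChar.eq F p
  let := ZMod.algebra F (ringChar F)
  refine AddChar.IsPrimitive.of_ne_one fun h ↦ ?_
  obtain ⟨b, hb⟩ := FiniteField.trace_to_zmod_nondegenerate F (one_ne_zero (α := F))
  rw [one_mul] at hb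
  have := DFunLike.congr_fun h b
  rw [AddChar.one_apply, zetaAddChar, AddChar.compAddMonoidHom_apply,
    ← (ZMod.stdAddChar (N := ringChar F)).map_zero_eq_one,
    ZMod.injective_stdAddChar.eq_iff] at this
  exact hb this

end ZetaAddChar

namespace MulChar

lemma eq_of_ne_one_of_sq_eq_one {M R : Type*} [CommMonoid M] [IsCyclic Mˣ] [CommRing R]
    [NoZeroDivisors R] {χ χ' : MulChar M R} (hχ : χ ≠ 1) (hχ' : χ' ≠ 1)
    (hχ2 : χ ^ 2 = 1) (hχ'2 : χ' ^ 2 = 1) : χ = χ' := by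
  obtain ⟨g, hg⟩ := IsCyclic.exists_generator (α := Mˣ)
  have apply_gen : ∀ η : MulChar M R, η ≠ 1 → η ^ 2 = 1 → η g = -1 := by
    intro η hη hη2
    have hsq : η g * η g = 1 := by
      rw [← mul_apply, ← sq, hη2, one_apply_coe]
    refine (mul_self_eq_one_iff.mp hsq).resolve_left fun h ↦ hη ?_
    rwa [eq_iff hg, one_apply_coe]
  rw [eq_iff hg, apply_gen χ hχ hχ2, apply_gen χ' hχ' hχ'2]

variable {R : Type*} [CommRing R] [IsDomain R]

lemma eq_ringHomComp_quadraticChar [DecidableEq F] (hF : ringChar F ≠ 2) {φ : MulChar F R}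
    (hφ : φ ≠ 1) (hφ2 : φ ^ 2 = 1) :
    φ = (quadraticChar F).ringHomComp (Int.castRingHom R) := by
  have hR : (-1 : R) ≠ 1 := by
    obtain ⟨b, hb⟩ := ne_one_iff.mp hφ
    have hsq : φ b * φ b = 1 := by rw [← mul_apply, ← sq, hφ2, one_apply_coe]
    rw [← (mul_self_eq_one_iff.mp hsq).resolve_left hb]
    exact hb
  refine eq_of_ne_one_of_sq_eq_one hφ (fun h ↦ ?_) hφ2
    ((quadraticChar_isQuadratic F).comp _).sq_eq_one
  obtain ⟨a, ha⟩ := quadraticChar_exists_neg_one' hF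
  have := congr($h a)
  rw [ringHomComp_apply, ha, one_apply_coe] at this
  exact hR (by simpa using this)

lemma sum_comp_sq (hF : ringChar F ≠ 2) {φ : MulChar F R} (hφ : φ ≠ 1) (hφ2 : φ ^ 2 = 1)
    (f : F → R) : ∑ u : F, f (u ^ 2) = ∑ t : F, (1 + φ t) * f t := by
  classical
  rw [eq_ringHomComp_quadraticChar hF hφ hφ2, ← sum_fiberwise' univ (· ^ 2) f]
  refine sum_congr rfl fun t _ ↦ ?_
  have hcard := quadraticChar_card_sqrts hF t
  rw [Set.toFinset_ofPred] at hcard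
  rw [sum_const, nsmul_eq_mul, ringHomComp_apply, eq_intCast, add_comm (1 : R)]
  congr 1
  exact_mod_cast congr(Int.cast (R := R) $hcard)

lemma apply_four_mul_jacobiSum_self (hF : ringChar F ≠ 2) {φ χ : MulChar F R} (hφ : φ ≠ 1)
    (hφ2 : φ ^ 2 = 1) (hχ : χ ≠ 1) : χ 4 * jacobiSum χ χ = jacobiSum φ χ := by
  have h2 : (2 : F) ≠ 0 := Ring.two_ne_zero hF
  let e : F ≃ F :=
    { toFun u := (1 - u) / 2
      invFun y := 1 - 2 * y
      left_inv u := by field_simp; ring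
      right_inv y := by field_simp; ring }
  calc χ 4 * jacobiSum χ χ = ∑ y : F, χ (4 * (y * (1 - y))) := by
        simp only [jacobiSum, mul_sum, map_mul]
    _ = ∑ u : F, χ (4 * (e u * (1 - e u))) := (e.sum_comp _).symm
    _ = ∑ u : F, χ (1 - u ^ 2) := by
        refine sum_congr rfl fun u _ ↦ congrArg χ ?_
        simp only [e, Equiv.coe_fn_mk]
        field_simp
        ring
    _ = ∑ t : F, (1 + φ t) * χ (1 - t) := sum_comp_sq hF hφ hφ2 fun t ↦ χ (1 - t)
    _ = ∑ t : F, χ (1 - t) + jacobiSum φ χ := by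
        simp only [add_mul, one_mul, sum_add_distrib, jacobiSum]
    _ = jacobiSum φ χ := by
        rw [Fintype.sum_equiv (Equiv.subLeft 1) (fun t ↦ χ (1 - t)) χ fun _ ↦ rfl,
          sum_eq_zero_of_ne_one hχ, zero_add]

theorem apply_four_mul_gaussSum_mul_gaussSum {K : Type*} [Field K] (hF : ringChar F ≠ 2)
    (hK : (Fintype.card F : K) ≠ 0) {ψ : AddChar F K} (hψ : ψ.IsPrimitive) {φ : MulChar F K}
    (hφ : φ ≠ 1) (hφ2 : φ ^ 2 = 1) (χ : MulChar F K) :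
    χ 4 * gaussSum χ ψ * gaussSum (χ * φ) ψ = gaussSum (χ ^ 2) ψ * gaussSum φ ψ := by
  have h2 : IsUnit (2 : F) := (Ring.two_ne_zero hF).isUnit
  have h4 : (4 : F) = 2 * 2 := by norm_num
  rcases eq_or_ne χ 1 with rfl | hχ
  · rw [one_apply (h4 ▸ h2.mul h2), one_pow, one_mul, one_mul]
  rcases eq_or_ne (χ ^ 2) 1 with hχ2 | hχ2
  · obtain rfl : χ = φ := eq_of_ne_one_of_sq_eq_one hχ hφ hχ2 hφ2
    rw [h4, map_mul, ← mul_apply, ← sq, hχ2, one_apply h2, one_mul, mul_comm]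
  have hφχ : φ * χ ≠ 1 := fun h ↦ hχ2 <| by
    have := congr($h ^ 2)
    rwa [mul_pow, hφ2, one_mul, one_pow] at this
  have hJ : jacobiSum φ χ ≠ 0 := by
    refine right_ne_zero_of_mul (a := gaussSum (φ * χ) ψ) ?_
    rw [jacobiSum_mul_nontrivial hφχ]
    exact mul_ne_zero (gaussSum_ne_zero_of_nontrivial hK hφ hψ)
      (gaussSum_ne_zero_of_nontrivial hK hχ hψ)
  refine mul_right_cancel₀ hJ ?_
  calc χ 4 * gaussSum χ ψ * gaussSum (χ * φ) ψ * jacobiSum φ χ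
      = gaussSum φ ψ * (χ 4 * (gaussSum χ ψ * gaussSum χ ψ)) := by
        rw [mul_comm χ φ, mul_assoc _ (gaussSum _ ψ), jacobiSum_mul_nontrivial hφχ]
        ring
    _ = gaussSum (χ ^ 2) ψ * gaussSum φ ψ * (χ 4 * jacobiSum χ χ) := by
        rw [← jacobiSum_mul_nontrivial (by rwa [← sq]), sq]
        ring
    _ = gaussSum (χ ^ 2) ψ * gaussSum φ ψ * jacobiSum φ χ := by
        rw [apply_four_mul_jacobiSum_self hF hφ hφ2 hχ]

end MulChar

/-- Hasse–Davenport product relation: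
`A(4) G(A) G(Aφ) = G(A²) G(φ)` for the quadratic character `φ`. -/
theorem hasse_davenport (p : ℕ) [Fact p.Prime] [CharP F p] (hp : p ≠ 2)
    (φ : MulChar F ℂ) (hφ : φ ≠ 1) (hφ2 : φ * φ = 1) (A : MulChar F ℂ) :
    A (4 : F) * gaussS p A * gaussS p (A * φ) = gaussS p (A ^ 2) * gaussS p φ := by
  simp only [gaussS_eq_gaussSum]
  exact MulChar.apply_four_mul_gaussSum_mul_gaussSum (ringChar.eq F p ▸ hp)
    (Nat.cast_ne_zero.mpr Fintype.card_ne_zero) (isPrimitive_zetaAddChar p) hφ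
    (sq φ ▸ hφ2) A
end

section
/- Let C ≠ D be multiplicative characters on F_q and x ∈ F_q with x ∉ {0,1}. Then the pseudo hypergeometric function satisfies F*(C,D;x) = (C(2)/q) · Σ_{t ∈ F_q} C D̄²(1-t) · C̄D(1-x-t²). -/
open Complex Finset

variable {F : Type*} [Field F] [Fintype F]

/-! Expanding both binomial coefficients as Jacobi sums and summing over `χ` by orthogonality
turns the character sum into a sum of `C(y) C(z) D̄(1 - z)` over the points of the affine curve
`x y² z = 4 (1 - y) (1 - z)` with `y, z ≠ 1`. This curve is rational:
`t ↦ (2(1-t) / (2(1-t) - x), (2(1-t) - x) / (1 - x - t²))` parametrises it bijectively for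
`t ≠ 1 - x/2` and carries the summand to `D(-1) C(2) CD̄²(1 - t) C̄D(1 - x - t²)`. The missing
parameter `t = 1 - x/2` accounts for the correction term `CD(-1) C̄(x/4) / q` of `F*`. -/

namespace MulChar

section Field

variable {K : Type*} [Field K] (χ : MulChar K ℂ)

lemma apply_div (a b : K) : χ (a / b) = χ a / χ b := map_div₀ χ.toMonoidWithZeroHom a b

lemma apply_ne_zero {a : K} (ha : a ≠ 0) : χ a ≠ 0 := apply_ne_zero_iff.mpr ha.isUnit

lemma apply_neg_one_mul_self : χ (-1) * χ (-1) = 1 := by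
  rw [← map_mul, neg_one_mul, neg_neg, χ.map_one]

end Field

lemma sum_apply_eq_ite {M R : Type*} [CommMonoid M] [Finite M] [DecidableEq M] [CommRing R]
    [IsDomain R] [HasEnoughRootsOfUnity R (Monoid.exponent Mˣ)] [Fintype (MulChar M R)] (a : M) :
    ∑ χ : MulChar M R, χ a = if a = 1 then (Nat.card Mˣ : R) else 0 := by
  split_ifs with ha
  · simp [ha, MulChar.map_one, ← Nat.card_eq_fintype_card,
      card_eq_card_units_of_hasEnoughRootsOfUnity M R]
  · obtain ⟨ψ, hψ⟩ := exists_apply_ne_one_of_hasEnoughRootsOfUnity M R ha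
    refine eq_zero_of_mul_eq_self_left hψ ?_
    rw [Finset.mul_sum]
    exact Fintype.sum_bijective _ (Group.mulLeft_bijective ψ) _ _ fun χ ↦ (mul_apply ψ χ a).symm

end MulChar

section Curve

variable {K : Type*} [Field K]

def curveArg (c : K) (p : K × K) : K := p.1 ^ 2 * p.2 * c / ((1 - p.1) * (1 - p.2))

/-- At the excluded parameter `t = 1 - x/2` this is the junk value `(0, 0)`. -/
def curveParam (x t : K) : K × K :=
  (2 * (1 - t) / (2 * (1 - t) - x), (2 * (1 - t) - x) / (1 - x - t ^ 2))

lemma eq_of_curveArg_eq_one {x : K} {p : K × K} (h2 : (2 : K) ≠ 0)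
    (h : curveArg (x / 4) p = 1) :
    p.1 ≠ 1 ∧ x * p.1 ^ 2 * p.2 = 4 * (1 - p.1) * (1 - p.2) := by
  have h4 : (4 : K) ≠ 0 := by simpa [show (4 : K) = 2 * 2 by norm_num] using h2
  have hp : (1 - p.1) * (1 - p.2) ≠ 0 := by
    rintro h0; rw [curveArg, h0, div_zero] at h; exact zero_ne_one h
  rw [curveArg, div_eq_one_iff_eq hp] at h
  refine ⟨fun h1 ↦ hp (by rw [h1, sub_self, zero_mul]), ?_⟩
  field_simp at h
  linear_combination h

lemma curveArg_curveParam {x t : K} (hx : x ≠ 0) (h2 : (2 : K) ≠ 0) (ht : t ≠ 1)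
    (hd : 2 * (1 - t) - x ≠ 0) (hw : 1 - x - t ^ 2 ≠ 0) :
    curveArg (x / 4) (curveParam x t) = 1 := by
  have ht' : 1 - t ≠ 0 := sub_ne_zero.mpr (Ne.symm ht)
  have h4 : (4 : K) ≠ 0 := by simpa [show (4 : K) = 2 * 2 by norm_num] using h2
  have hy : 1 - (curveParam x t).1 = -x / (2 * (1 - t) - x) := by
    simp only [curveParam]; field_simp; ring
  have hz : 1 - (curveParam x t).2 = -(1 - t) ^ 2 / (1 - x - t ^ 2) := by
    simp only [curveParam]; field_simp; ring
  rw [curveArg, hy, hz, div_eq_one_iff_eq (by simp [hx, hd, hw, ht'])]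
  simp only [curveParam]
  field_simp
  ring

lemma curveParam_fst_inv {x t : K} (hx : x ≠ 0) (h2 : (2 : K) ≠ 0)
    (hd : 2 * (1 - t) - x ≠ 0) :
    1 - x * (curveParam x t).1 / (2 * ((curveParam x t).1 - 1)) = t := by
  have hy : (curveParam x t).1 - 1 = x / (2 * (1 - t) - x) := by
    simp only [curveParam]; field_simp; ring
  rw [hy]
  simp only [curveParam]
  field_simp
  ring

lemma curveParam_of_mem_curve {x y z : K} (hx : x ≠ 0) (h2 : (2 : K) ≠ 0) (hy : y ≠ 1)
    (h : x * y ^ 2 * z = 4 * (1 - y) * (1 - z)) :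
    curveParam x (1 - x * y / (2 * (y - 1))) = (y, z) := by
  have hy1 : y - 1 ≠ 0 := sub_ne_zero.mpr hy
  have hd : 2 * (1 - (1 - x * y / (2 * (y - 1)))) - x = x / (y - 1) := by
    field_simp; ring
  have hzw : z * (1 - x - (1 - x * y / (2 * (y - 1))) ^ 2) = x / (y - 1) := by
    field_simp
    linear_combination (-x) * h
  have hw : 1 - x - (1 - x * y / (2 * (y - 1))) ^ 2 ≠ 0 := by
    intro hw
    rw [hw, mul_zero] at hzw
    exact div_ne_zero hx hy1 hzw.symm
  simp only [curveParam, hd, Prod.mk.injEq]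
  constructor
  · field_simp; ring
  · rw [← hzw, mul_div_cancel_right₀ _ hw]

lemma curveParam_weight (C D : MulChar K ℂ) {x t : K} (hd : 2 * (1 - t) - x ≠ 0) :
    D (-1) * (C (curveParam x t).1 * C (curveParam x t).2 * D⁻¹ (1 - (curveParam x t).2)) =
      C 2 * ((C * D⁻¹ ^ 2) (1 - t) * (C⁻¹ * D) (1 - x - t ^ 2)) := by
  by_cases hw : 1 - x - t ^ 2 = 0
  · simp [curveParam, hw, MulChar.map_zero]
  have hz : 1 - (curveParam x t).2 = -1 * (1 - t) ^ 2 / (1 - x - t ^ 2) := by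
    simp only [curveParam]; field_simp; ring
  rw [hz]
  simp only [curveParam, MulChar.mul_apply, MulChar.inv_apply_eq_inv', MulChar.apply_div, map_mul,
    map_pow, MulChar.pow_apply' _ two_ne_zero, inv_div]
  linear_combination
    (C 2 * C (1 - t) * (D (1 - t))⁻¹ ^ 2 * (C (1 - x - t ^ 2))⁻¹ * D (1 - x - t ^ 2)) *
      (D (-1) * (D (-1))⁻¹ * mul_inv_cancel₀ (C.apply_ne_zero hd) +
        mul_inv_cancel₀ (D.apply_ne_zero (neg_ne_zero.mpr one_ne_zero)))

lemma weight_at_one_sub_half (C D : MulChar K ℂ) {x : K} (hx : x ≠ 0) (h2 : (2 : K) ≠ 0) :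
    C 2 * ((C * D⁻¹ ^ 2) (1 - (1 - x / 2)) * (C⁻¹ * D) (1 - x - (1 - x / 2) ^ 2)) =
      (C * D) (-1) * C⁻¹ (x / 4) := by
  have hu : 1 - (1 - x / 2) = x / 2 := by ring
  have hw : 1 - x - (1 - x / 2) ^ 2 = -1 * x ^ 2 / 2 ^ 2 := by field_simp; ring
  rw [hu, hw, show (4 : K) = 2 ^ 2 by norm_num]
  simp only [MulChar.mul_apply, MulChar.inv_apply_eq_inv', MulChar.apply_div, map_mul, map_pow,
    MulChar.pow_apply' _ two_ne_zero, inv_div]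
  have := C.apply_ne_zero h2
  have := C.apply_ne_zero hx
  have := D.apply_ne_zero h2
  have := D.apply_ne_zero hx
  have := C.apply_ne_zero (neg_ne_zero.mpr (one_ne_zero (α := K)))
  field_simp
  linear_combination -D (-1) * C.apply_neg_one_mul_self

end Curve

lemma binom_mul_binom_mul_apply (C D χ : MulChar F ℂ) (c : F) :
    binom (C * χ ^ 2) χ * binom (C * χ) (D * χ) * χ c =
      D (-1) / (Fintype.card F : ℂ) ^ 2 *
        ∑ y : F, ∑ z : F, C y * C z * D⁻¹ (1 - z) * χ (curveArg c (y, z)) := by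
  simp only [binom, jacobiS, curveArg, Finset.mul_sum, Finset.sum_mul]
  rw [Finset.sum_comm]
  refine Finset.sum_congr rfl fun y _ ↦ Finset.sum_congr rfl fun z _ ↦ ?_
  simp only [MulChar.mul_apply, MulChar.inv_apply_eq_inv', MulChar.apply_div, sq, map_mul,
    mul_inv]
  linear_combination (D (-1) / (Fintype.card F : ℂ) ^ 2 * C y * C z * (D (1 - z))⁻¹ * χ y ^ 2 *
    χ z * χ c * (χ (1 - y))⁻¹ * (χ (1 - z))⁻¹) * χ.apply_neg_one_mul_self

lemma mul_sum_binom_mul_binom_mul_apply [Fintype (MulChar F ℂ)] [DecidableEq F]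
    (C D : MulChar F ℂ) (c : F) :
    (Fintype.card F : ℂ) / (Fintype.card F - 1) *
        ∑ χ : MulChar F ℂ, binom (C * χ ^ 2) χ * binom (C * χ) (D * χ) * χ c =
      D (-1) / Fintype.card F * ∑ p : F × F,
        if curveArg c p = 1 then C p.1 * C p.2 * D⁻¹ (1 - p.2) else 0 := by
  have : NeZero (Monoid.exponent Fˣ) := ⟨Monoid.exponent_ne_zero_of_finite⟩
  have hq1 : (Fintype.card F : ℂ) - 1 = Nat.card Fˣ := by
    rw [Nat.card_units, Nat.card_eq_fintype_card, Nat.cast_sub Fintype.card_pos, Nat.cast_one]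
  have hq1' : (Fintype.card F : ℂ) - 1 ≠ 0 := by
    rw [hq1]; exact Nat.cast_ne_zero.mpr Nat.card_pos.ne'
  rw [Fintype.sum_prod_type]
  simp only [binom_mul_binom_mul_apply, Finset.mul_sum]
  rw [Finset.sum_comm]
  refine Finset.sum_congr rfl fun y _ ↦ ?_
  rw [Finset.sum_comm]
  refine Finset.sum_congr rfl fun z _ ↦ ?_
  simp only [← Finset.mul_sum, MulChar.sum_apply_eq_ite, ← hq1]
  split_ifs
  · field_simp
  · simp only [mul_zero]

lemma mul_sum_erase_eq_sum_curve [DecidableEq F] (C D : MulChar F ℂ) {x : F} (hx : x ≠ 0)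
    (h2 : (2 : F) ≠ 0) :
    C 2 * ∑ t ∈ univ.erase (1 - x / 2), (C * D⁻¹ ^ 2) (1 - t) * (C⁻¹ * D) (1 - x - t ^ 2) =
      D (-1) * ∑ p : F × F,
        if curveArg (x / 4) p = 1 then C p.1 * C p.2 * D⁻¹ (1 - p.2) else 0 := by
  have hd {t : F} (ht : t ≠ 1 - x / 2) : 2 * (1 - t) - x ≠ 0 := fun h ↦
    ht (by field_simp; linear_combination -h)
  rw [mul_sum, mul_sum]
  refine sum_of_injOn (curveParam x) ?_ (fun _ _ ↦ mem_coe.mpr (mem_univ _)) ?_ ?_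
  · refine Set.LeftInvOn.injOn (f₁' := fun p ↦ 1 - x * p.1 / (2 * (p.1 - 1))) fun t ht ↦ ?_
    exact curveParam_fst_inv hx h2 (hd (mem_erase.mp ht).1)
  · rintro ⟨y, z⟩ - hp
    rw [mul_ite, mul_zero, ite_eq_right_iff]
    intro h
    obtain ⟨hy, hcurve⟩ := eq_of_curveArg_eq_one h2 h
    refine absurd ⟨_, mem_erase.mpr ⟨?_, mem_univ _⟩, curveParam_of_mem_curve hx h2 hy hcurve⟩ hp
    intro h'
    have hy1 : y - 1 ≠ 0 := sub_ne_zero.mpr hy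
    field_simp at h'
    exact hx (by linear_combination -h')
  · intro t ht
    have hdt := hd (mem_erase.mp ht).1
    rw [← curveParam_weight C D hdt]
    by_cases hw : 1 - x - t ^ 2 = 0
    · simp [curveParam, hw, MulChar.map_zero]
    by_cases ht1 : t = 1
    · simp [curveParam, ht1, MulChar.map_zero]
    rw [if_pos (curveArg_curveParam hx h2 ht1 hdt hw)]

theorem Fstar_alt_general (p : ℕ) [CharP F p] (hp : p ≠ 2)
    (C D : MulChar F ℂ) (x : F) (hx0 : x ≠ 0) :
    Fstar C D x =
      C (2 : F) / (Fintype.card F : ℂ) *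
        ∑ t : F, (C * D⁻¹ ^ 2) (1 - t) * (C⁻¹ * D) (1 - x - t ^ 2) := by
  classical
  let _ : Fintype (MulChar F ℂ) := Fintype.ofFinite _
  have h2 : (2 : F) ≠ 0 := Ring.two_ne_zero (by rwa [ringChar.eq F p])
  have hF : Fstar C D x = (Fintype.card F : ℂ) / (Fintype.card F - 1) *
      ∑ χ : MulChar F ℂ, binom (C * χ ^ 2) χ * binom (C * χ) (D * χ) * χ (x / 4)
    + (C * D) (-1) * C⁻¹ (x / 4) / Fintype.card F := rfl
  rw [hF, mul_sum_binom_mul_binom_mul_apply, ← sum_erase_add univ _ (mem_univ (1 - x / 2))]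
  linear_combination
    -(mul_sum_erase_eq_sum_curve C D hx0 h2 + weight_at_one_sub_half C D hx0 h2) / Fintype.card F

/-- for `C ≠ D` and `x ∉ {0,1}`,
`F*(C,D;x) = (C(2)/q) Σ_t CD̄²(1-t) C̄D(1-x-t²)`. -/
theorem Fstar_alt (p : ℕ) [Fact p.Prime] [CharP F p] (hp : p ≠ 2)
    (C D : MulChar F ℂ) (hCD : C ≠ D) (x : F) (hx0 : x ≠ 0) (hx1 : x ≠ 1) :
    Fstar C D x =
      C (2 : F) / (Fintype.card F : ℂ) *
        ∑ t : F, (C * D⁻¹ ^ 2) (1 - t) * (C⁻¹ * D) (1 - x - t ^ 2) :=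
  Fstar_alt_general p hp C D x hx0
end
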